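/- arXiv:nlin/0302059 — 3 statements merged into one kernel-verified Lean document; each statement's English description precedes it below -/
import Mathlib

section
/- Let ζ₁,…,ζₙ be distinct complex numbers with positive imaginary parts and c_{jk} = i/(ζ_k - ζ_j*). Then det[c_{i_b i_a}]_{a,b=1}^{n} = (i/(ζ_{i_n} - ζ_{i_n}*)) · ∏_{l=1}^{n-1} |(ζ_{i_l} - ζ_{i_n})/(ζ_{i_l} - ζ_{i_n}*)|² · det[c_{i_b i_a}]_{a,b=1}^{n-1}. -/
/-!
Take the Schur complement of the last diagonal entry. For a kernel `u / (x a - y b)` the Schur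
complement is again the same kernel, rescaled by a factor depending only on the row and one
depending only on the column (the row and column reductions `c_{jk} - c_{jn}`, `c_{jk} - c_{nk}`),
so its determinant is the smaller determinant times the products of these factors. For
`y = conj x` the row and column factors of the same index are `-q` and `-conj q`, with
product `|q|²`.
-/

open Complex Matrix BigOperators

open ComplexConjugate

theorem div_sub_schur_complement {K : Type*} [Field K] (u x y z w : K)
    (hxy : x - y ≠ 0) (hxz : x - z ≠ 0) (hwy : w - y ≠ 0) :
    u / (x - y) - u / (x - z) * (u / (w - z))⁻¹ * (u / (w - y))
      = (w - x) / (x - z) * ((y - z) / (w - y)) * (u / (x - y)) := by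
  field_simp
  ring

namespace Matrix

variable {K : Type*} [Field K] {n : ℕ}

theorem det_succ_eq_mul_det_schurComplement (M : Matrix (Fin (n + 1)) (Fin (n + 1)) K)
    (h : M (Fin.last n) (Fin.last n) ≠ 0) :
    M.det = M (Fin.last n) (Fin.last n) *
      (of fun i j : Fin n => M i.castSucc j.castSucc - M i.castSucc (Fin.last n) *
        (M (Fin.last n) (Fin.last n))⁻¹ * M (Fin.last n) j.castSucc).det := by
  set d := M (Fin.last n) (Fin.last n)
  let D : Matrix (Fin 1) (Fin 1) K := of fun _ _ => d
  let _ : Invertible D := invertibleOfRightInverse D (of fun _ _ => d⁻¹) <| by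
    ext; simp [D, h, mul_apply, one_apply, Fin.fin_one_eq_zero]
  have hinv : ⅟D = of fun _ _ => d⁻¹ := rfl
  have hblocks : M.submatrix finSumFinEquiv finSumFinEquiv =
      fromBlocks (of fun i j => M i.castSucc j.castSucc) (of fun i _ => M i.castSucc (Fin.last n))
        (of fun _ j => M (Fin.last n) j.castSucc) D := by
    ext (i | i) (j | j) <;>
      simp only [submatrix_apply, finSumFinEquiv_apply_left, finSumFinEquiv_apply_right,
        fromBlocks_apply₁₁, fromBlocks_apply₁₂, fromBlocks_apply₂₁, fromBlocks_apply₂₂,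
        of_apply, Fin.fin_one_eq_zero] <;>
      rfl
  rw [← det_submatrix_equiv_self finSumFinEquiv, hblocks, det_fromBlocks₂₂]
  congr 2
  · simp [D]
  · ext i j
    simp [mul_apply, hinv]

theorem det_of_mul_mul {m R : Type*} [Fintype m] [DecidableEq m] [CommRing R] (g h : m → R)
    (A : Matrix m m R) : (of fun i j => g i * h j * A i j).det = (∏ i, g i * h i) * A.det := by
  have hcol := det_mul_column g (of fun i j => h j * A i j)
  simp only [of_apply] at hcol
  simp only [mul_assoc, hcol, det_mul_row, Finset.prod_mul_distrib]

theorem det_div_sub_eq_mul_prod_mul_det_castSucc (u : K) (x y : Fin (n + 1) → K) (hu : u ≠ 0)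
    (hxy : ∀ a b, x a - y b ≠ 0) :
    (of fun a b => u / (x a - y b)).det
      = u / (x (Fin.last n) - y (Fin.last n)) *
        (∏ a : Fin n, (x (Fin.last n) - x a.castSucc) / (x a.castSucc - y (Fin.last n)) *
          ((y a.castSucc - y (Fin.last n)) / (x (Fin.last n) - y a.castSucc))) *
        (of fun a b : Fin n => u / (x a.castSucc - y b.castSucc)).det := by
  set N := Fin.last n
  set A : Matrix (Fin n) (Fin n) K := of fun a b => u / (x a.castSucc - y b.castSucc)
  have hschur : (of fun a b : Fin n => u / (x a.castSucc - y b.castSucc) -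
      u / (x a.castSucc - y N) * (u / (x N - y N))⁻¹ * (u / (x N - y b.castSucc))) =
      of fun a b => (x N - x a.castSucc) / (x a.castSucc - y N) *
        ((y b.castSucc - y N) / (x N - y b.castSucc)) * A a b :=
    ext fun a b => div_sub_schur_complement _ _ _ _ _ (hxy _ _) (hxy _ _) (hxy _ _)
  rw [det_succ_eq_mul_det_schurComplement _ (div_ne_zero hu (hxy _ _))]
  simp only [of_apply]
  rw [hschur, det_of_mul_mul, mul_assoc]

end Matrix

theorem Complex.sub_div_sub_conj_mul_conj_eq_sq_norm (z w : ℂ) :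
    (w - z) / (z - conj w) * ((conj z - conj w) / (w - conj z))
      = ((‖(z - w) / (z - conj w)‖ ^ 2 : ℝ) : ℂ) := by
  rw [ofReal_pow, ← mul_conj', map_div₀, map_sub, map_sub, conj_conj, ← neg_sub z w,
    ← neg_sub (conj z) w, neg_div, div_neg, neg_mul_neg]

theorem Complex.sub_conj_ne_zero_of_im_pos {z w : ℂ} (hz : 0 < z.im) (hw : 0 < w.im) :
    z - conj w ≠ 0 := by
  intro h
  have him := congrArg im h
  simp only [sub_im, conj_im, zero_im] at him
  linarith

theorem stmt6_general {n : ℕ} (ζ : Fin (n+1) → ℂ)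
    (him : ∀ j, 0 < (ζ j).im) :
    Matrix.det (fun a b : Fin (n+1) => Complex.I / (ζ a - (starRingEnd ℂ) (ζ b)))
      = Complex.I / (ζ (Fin.last n) - (starRingEnd ℂ) (ζ (Fin.last n))) *
        ((∏ l : Fin n, (‖(ζ l.castSucc - ζ (Fin.last n)) /
            (ζ l.castSucc - (starRingEnd ℂ) (ζ (Fin.last n)))‖)^2 : ℝ) : ℂ) *
        Matrix.det (fun a b : Fin n =>
          Complex.I / (ζ a.castSucc - (starRingEnd ℂ) (ζ b.castSucc))) := by
  rw [ofReal_prod, Finset.prod_congr rfl fun l _ => (sub_div_sub_conj_mul_conj_eq_sq_norm _ _).symm]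
  exact det_div_sub_eq_mul_prod_mul_det_castSucc I ζ (fun b => conj (ζ b)) I_ne_zero
    fun a b => sub_conj_ne_zero_of_im_pos (him a) (him b)

theorem stmt6 {n : ℕ} (ζ : Fin (n+1) → ℂ) (hinj : Function.Injective ζ)
    (him : ∀ j, 0 < (ζ j).im) :
    Matrix.det (fun a b : Fin (n+1) => Complex.I / (ζ a - (starRingEnd ℂ) (ζ b)))
      = Complex.I / (ζ (Fin.last n) - (starRingEnd ℂ) (ζ (Fin.last n))) *
        ((∏ l : Fin n, (‖(ζ l.castSucc - ζ (Fin.last n)) /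
            (ζ l.castSucc - (starRingEnd ℂ) (ζ (Fin.last n)))‖)^2 : ℝ) : ℂ) *
        Matrix.det (fun a b : Fin n =>
          Complex.I / (ζ a.castSucc - (starRingEnd ℂ) (ζ b.castSucc))) :=
  stmt6_general ζ him
end

section
/- With the setup of the two-soliton collision laws (ζ₁, ζ₂ distinct with positive imaginary parts, u₁, u₂ unit vectors in ℂ^m, φ₁₂ real defined by e^{-2φ₁₂} = |（ζ₁-ζ₂)/(ζ₁-ζ₂*)|²(1 + ((ζ₁-ζ₁*)(ζ₂-ζ₂*)/|ζ₁-ζ₂*|²)|⟨u₁,u₂⟩|²), and u_{{1},2} = e^{φ₁₂}((ζ₁*-ζ₂*)/(ζ₁-ζ₂*))(u₂ - ((ζ₁-ζ₁*)/(ζ₁-ζ₂*))⟨u₂,u₁⟩u₁), u_{{2},1} = e^{φ₁₂}((ζ₂*-ζ₁*)/(ζ₂-ζ₁*))(u₁ - ((ζ₂-ζ₂*)/(ζ₂-ζ₁*))⟨u₁,u₂⟩u₂)), the modulus of the Hermitian product is preserved: |⟨u₁, u₂⟩| = |⟨u_{{2},1}, u_{{1},2}⟩|. -/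
open Complex Matrix BigOperators

noncomputable section

/-- Hermitian inner product on ℂ^m, linear in the first slot. -/
def herm {m : ℕ} (u v : Fin m → ℂ) : ℂ := ∑ a, u a * (starRingEnd ℂ) (v a)

/-!
Both collided vectors are combinations of `u₁` and `u₂`, so sesquilinearity and `|u₁| = |u₂| = 1`
give, with `c = ⟨u₁, u₂⟩`, phase factors `p` and coupling coefficients `α`,
`⟨u_{{2},1}, u_{{1},2}⟩ = e^{2φ₁₂} p₂₁ p̄₁₂ c (1 - ᾱ₁₂ - α₂₁ + ᾱ₁₂ α₂₁ |c|²)`.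
With `d = ζ₂ - ζ₁*` the last factor is `(|d|² - 4 Im ζ₁ Im ζ₂ |c|²) / d²`, and since
`|p₂₁ p₁₂| = |ζ₁ - ζ₂|² / |d|²` its modulus times `|p₂₁ p₁₂|` is exactly `e^{-2φ₁₂}`.
By Cauchy–Schwarz `e^{-2φ₁₂} > 0`, so the normalisation cancels.
-/

open ComplexConjugate

section Herm

variable {m : ℕ}

lemma herm_smul_left (k : ℂ) (u v : Fin m → ℂ) : herm (k • u) v = k * herm u v := by
  simp only [herm, Finset.mul_sum, Pi.smul_apply, smul_eq_mul, mul_assoc]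

lemma herm_smul_right (k : ℂ) (u v : Fin m → ℂ) : herm u (k • v) = conj k * herm u v := by
  simp only [herm, Finset.mul_sum, Pi.smul_apply, smul_eq_mul, map_mul]
  exact Finset.sum_congr rfl fun _ _ => by ring

lemma herm_sub_left (u v w : Fin m → ℂ) : herm (u - v) w = herm u w - herm v w := by
  simp only [herm, Pi.sub_apply, sub_mul, Finset.sum_sub_distrib]

lemma herm_sub_right (u v w : Fin m → ℂ) : herm u (v - w) = herm u v - herm u w := by
  simp only [herm, Pi.sub_apply, map_sub, mul_sub, Finset.sum_sub_distrib]

lemma herm_swap (u v : Fin m → ℂ) : herm v u = conj (herm u v) := by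
  simp only [herm, map_sum, map_mul, conj_conj, mul_comm]

lemma herm_eq_inner (u v : Fin m → ℂ) :
    herm u v = inner ℂ (WithLp.toLp 2 v : EuclideanSpace ℂ (Fin m)) (WithLp.toLp 2 u) := by
  simp only [herm, PiLp.inner_apply, RCLike.inner_apply]

lemma herm_self (u : Fin m → ℂ) :
    herm u u = ((‖(WithLp.toLp 2 u : EuclideanSpace ℂ (Fin m))‖ : ℝ) : ℂ) ^ 2 := by
  rw [herm_eq_inner, inner_self_eq_norm_sq_to_K]
  rfl

lemma norm_herm_le_one {u v : Fin m → ℂ} (hu : herm u u = 1) (hv : herm v v = 1) :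
    ‖herm u v‖ ≤ 1 := by
  have hunit : ∀ w : Fin m → ℂ, herm w w = 1 → ‖(WithLp.toLp 2 w : EuclideanSpace ℂ (Fin m))‖ = 1 :=
    fun w hw => by
      rw [herm_self] at hw
      exact (pow_eq_one_iff_of_nonneg (norm_nonneg _) two_ne_zero).1 (by exact_mod_cast hw)
  simpa [herm_eq_inner, hunit u hu, hunit v hv] using norm_inner_le_norm (𝕜 := ℂ)
    (WithLp.toLp 2 v : EuclideanSpace ℂ (Fin m)) (WithLp.toLp 2 u)

lemma herm_smul_sub_smul (k l a b : ℂ) (u v : Fin m → ℂ) :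
    herm (k • (u - a • v)) (l • (v - b • u)) =
      k * conj l * (herm u v - conj b * herm u u - a * herm v v + a * conj b * herm v u) := by
  simp only [herm_smul_left, herm_smul_right, herm_sub_left, herm_sub_right]
  ring

end Herm

section SpectralParameters

variable (ζ₁ ζ₂ : ℂ)

lemma sub_conj_mul_sub_conj :
    (ζ₁ - conj ζ₁) * (ζ₂ - conj ζ₂) = ((-(4 * ζ₁.im * ζ₂.im) : ℝ) : ℂ) := by
  rw [sub_conj, sub_conj]
  push_cast
  linear_combination (4 * ζ₁.im * ζ₂.im : ℂ) * I_sq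

lemma norm_sub_conj_sq : ‖ζ₁ - conj ζ₂‖ ^ 2 = ‖ζ₁ - ζ₂‖ ^ 2 + 4 * ζ₁.im * ζ₂.im := by
  simp only [← normSq_eq_norm_sq, normSq_apply, sub_re, sub_im, conj_re, conj_im]
  ring

lemma norm_sub_conj_comm : ‖ζ₂ - conj ζ₁‖ = ‖ζ₁ - conj ζ₂‖ := by
  rw [← norm_conj, map_sub, conj_conj, norm_sub_rev]

variable {ζ₁ ζ₂}

lemma sub_conj_ne_zero (h : ζ₁.im + ζ₂.im ≠ 0) : ζ₁ - conj ζ₂ ≠ 0 := by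
  intro h0
  exact h (by simpa using congrArg im h0)

end SpectralParameters

section Collision

variable {m : ℕ} {ζ₁ ζ₂ : ℂ}

def phaseFactor (ζ₁ ζ₂ : ℂ) : ℂ := (conj ζ₁ - conj ζ₂) / (ζ₁ - conj ζ₂)

def couplingCoeff (ζ₁ ζ₂ : ℂ) : ℂ := (ζ₁ - conj ζ₁) / (ζ₁ - conj ζ₂)

def collisionWeight (ζ₁ ζ₂ : ℂ) (r : ℝ) : ℝ :=
  ‖(ζ₁ - ζ₂) / (ζ₁ - conj ζ₂)‖ ^ 2 *
    (1 + ((ζ₁ - conj ζ₁) * (ζ₂ - conj ζ₂)).re / ‖ζ₁ - conj ζ₂‖ ^ 2 * r ^ 2)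

/-- `collide ζ₁ ζ₂ (e^{φ₁₂}) u₁ u₂` is `u_{{1},2}`;
`e^{-2φ₁₂} = collisionWeight ζ₁ ζ₂ |⟨u₁, u₂⟩|`. -/
def collide (ζ₁ ζ₂ : ℂ) (s : ℝ) (u₁ u₂ : Fin m → ℂ) : Fin m → ℂ :=
  ((s : ℂ) * phaseFactor ζ₁ ζ₂) • (u₂ - (couplingCoeff ζ₁ ζ₂ * herm u₂ u₁) • u₁)

lemma norm_phaseFactor (ζ₁ ζ₂ : ℂ) : ‖phaseFactor ζ₁ ζ₂‖ = ‖ζ₁ - ζ₂‖ / ‖ζ₁ - conj ζ₂‖ := by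
  rw [phaseFactor, norm_div, ← map_sub, norm_conj]

lemma collisionWeight_eq (hB : ζ₁ - conj ζ₂ ≠ 0) (r : ℝ) :
    collisionWeight ζ₁ ζ₂ r =
      ‖ζ₁ - ζ₂‖ ^ 2 * (‖ζ₁ - conj ζ₂‖ ^ 2 - 4 * ζ₁.im * ζ₂.im * r ^ 2) / ‖ζ₁ - conj ζ₂‖ ^ 4 := by
  have hB' : ‖ζ₁ - conj ζ₂‖ ≠ 0 := norm_ne_zero_iff.2 hB
  rw [collisionWeight, sub_conj_mul_sub_conj, ofReal_re, norm_div]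
  field_simp
  ring

lemma collisionWeight_pos (h1 : 0 < ζ₁.im) (h2 : 0 < ζ₂.im) (hne : ζ₁ ≠ ζ₂) {r : ℝ}
    (hr : r ^ 2 ≤ 1) : 0 < collisionWeight ζ₁ ζ₂ r := by
  have hB : ζ₁ - conj ζ₂ ≠ 0 := sub_conj_ne_zero (by positivity)
  have hA : 0 < ‖ζ₁ - ζ₂‖ := norm_pos_iff.2 (sub_ne_zero.2 hne)
  have hN : 0 < ‖ζ₁ - conj ζ₂‖ ^ 2 - 4 * ζ₁.im * ζ₂.im * r ^ 2 := by
    rw [norm_sub_conj_sq]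
    nlinarith [mul_pos h1 h2]
  have hB' : 0 < ‖ζ₁ - conj ζ₂‖ := norm_pos_iff.2 hB
  rw [collisionWeight_eq hB]
  positivity

lemma one_sub_conj_couplingCoeff_sub_couplingCoeff (hd : ζ₂ - conj ζ₁ ≠ 0) (r : ℝ) :
    1 - conj (couplingCoeff ζ₁ ζ₂) - couplingCoeff ζ₂ ζ₁ +
        conj (couplingCoeff ζ₁ ζ₂) * couplingCoeff ζ₂ ζ₁ * r =
      ((‖ζ₁ - conj ζ₂‖ ^ 2 - 4 * ζ₁.im * ζ₂.im * r : ℝ) : ℂ) / (ζ₂ - conj ζ₁) ^ 2 := by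
  have hconj : conj (couplingCoeff ζ₁ ζ₂) = (ζ₁ - conj ζ₁) / (ζ₂ - conj ζ₁) := by
    rw [couplingCoeff, map_div₀, map_sub, map_sub, conj_conj, conj_conj, ← neg_div_neg_eq,
      neg_sub, neg_sub]
  have hnum : ((‖ζ₁ - conj ζ₂‖ ^ 2 - 4 * ζ₁.im * ζ₂.im * r : ℝ) : ℂ) =
      (ζ₂ - conj ζ₁) * conj (ζ₂ - conj ζ₁) + (ζ₁ - conj ζ₁) * (ζ₂ - conj ζ₂) * r := by
    rw [sub_conj_mul_sub_conj, mul_conj, normSq_eq_norm_sq, norm_sub_conj_comm]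
    push_cast
    ring
  rw [hconj, couplingCoeff, hnum, map_sub, conj_conj]
  field_simp
  ring

lemma herm_collide_collide {u₁ u₂ : Fin m → ℂ} (hu1 : herm u₁ u₁ = 1) (hu2 : herm u₂ u₂ = 1)
    (s t : ℝ) :
    herm (collide ζ₂ ζ₁ s u₂ u₁) (collide ζ₁ ζ₂ t u₁ u₂) =
      s * t * phaseFactor ζ₂ ζ₁ * conj (phaseFactor ζ₁ ζ₂) * herm u₁ u₂ *
        (1 - conj (couplingCoeff ζ₁ ζ₂) - couplingCoeff ζ₂ ζ₁ +
          conj (couplingCoeff ζ₁ ζ₂) * couplingCoeff ζ₂ ζ₁ * (‖herm u₁ u₂‖ ^ 2 : ℝ)) := by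
  rw [collide, collide, herm_smul_sub_smul, hu1, hu2, herm_swap u₁ u₂]
  simp only [map_mul, conj_ofReal, conj_conj, ofReal_pow, ← mul_conj', map_mul]
  ring

lemma norm_herm_collide_collide (h1 : 0 < ζ₁.im) (h2 : 0 < ζ₂.im)
    {u₁ u₂ : Fin m → ℂ} (hu1 : herm u₁ u₁ = 1) (hu2 : herm u₂ u₂ = 1) (s : ℝ) :
    ‖herm (collide ζ₂ ζ₁ s u₂ u₁) (collide ζ₁ ζ₂ s u₁ u₂)‖ =
      s ^ 2 * collisionWeight ζ₁ ζ₂ ‖herm u₁ u₂‖ * ‖herm u₁ u₂‖ := by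
  have hB : ζ₁ - conj ζ₂ ≠ 0 := sub_conj_ne_zero (by positivity)
  have hd : ζ₂ - conj ζ₁ ≠ 0 := sub_conj_ne_zero (by positivity)
  have hN : 0 ≤ ‖ζ₁ - conj ζ₂‖ ^ 2 - 4 * ζ₁.im * ζ₂.im * ‖herm u₁ u₂‖ ^ 2 := by
    have hc : ‖herm u₁ u₂‖ ^ 2 ≤ 1 := pow_le_one₀ (norm_nonneg _) (norm_herm_le_one hu1 hu2)
    rw [norm_sub_conj_sq]
    nlinarith [mul_pos h1 h2, sq_nonneg ‖ζ₁ - ζ₂‖]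
  rw [herm_collide_collide hu1 hu2, one_sub_conj_couplingCoeff_sub_couplingCoeff hd,
    collisionWeight_eq hB]
  simp only [norm_mul, norm_div, norm_pow, norm_conj, norm_phaseFactor, norm_real,
    Real.norm_eq_abs, abs_mul_abs_self, abs_of_nonneg hN, norm_sub_conj_comm ζ₁ ζ₂,
    norm_sub_rev ζ₂ ζ₁]
  field_simp

end Collision

theorem stmt11 {m : ℕ} (ζ₁ ζ₂ : ℂ) (h1 : 0 < ζ₁.im) (h2 : 0 < ζ₂.im) (hne : ζ₁ ≠ ζ₂)
    (u₁ u₂ : Fin m → ℂ) (hu1 : herm u₁ u₁ = 1) (hu2 : herm u₂ u₂ = 1) :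
    let eneg : ℝ := (‖(ζ₁ - ζ₂) / (ζ₁ - (starRingEnd ℂ) ζ₂)‖)^2 *
      (1 + ((ζ₁ - (starRingEnd ℂ) ζ₁) * (ζ₂ - (starRingEnd ℂ) ζ₂)).re /
        (‖ζ₁ - (starRingEnd ℂ) ζ₂‖)^2 * (‖herm u₁ u₂‖)^2)
    let u12 : Fin m → ℂ := fun a =>
      (((Real.sqrt eneg)⁻¹ : ℝ) : ℂ) *
        (((starRingEnd ℂ) ζ₁ - (starRingEnd ℂ) ζ₂) / (ζ₁ - (starRingEnd ℂ) ζ₂)) *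
        (u₂ a - (ζ₁ - (starRingEnd ℂ) ζ₁) / (ζ₁ - (starRingEnd ℂ) ζ₂) *
          herm u₂ u₁ * u₁ a)
    let u21 : Fin m → ℂ := fun a =>
      (((Real.sqrt eneg)⁻¹ : ℝ) : ℂ) *
        (((starRingEnd ℂ) ζ₂ - (starRingEnd ℂ) ζ₁) / (ζ₂ - (starRingEnd ℂ) ζ₁)) *
        (u₁ a - (ζ₂ - (starRingEnd ℂ) ζ₂) / (ζ₂ - (starRingEnd ℂ) ζ₁) *
          herm u₁ u₂ * u₂ a)
    ‖herm u₁ u₂‖ = ‖herm u21 u12‖ := by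
  intro eneg u12 u21
  have hw : 0 < collisionWeight ζ₁ ζ₂ ‖herm u₁ u₂‖ :=
    collisionWeight_pos h1 h2 hne (pow_le_one₀ (norm_nonneg _) (norm_herm_le_one hu1 hu2))
  show _ = ‖herm (collide ζ₂ ζ₁ (√(collisionWeight ζ₁ ζ₂ ‖herm u₁ u₂‖))⁻¹ u₂ u₁)
    (collide ζ₁ ζ₂ (√(collisionWeight ζ₁ ζ₂ ‖herm u₁ u₂‖))⁻¹ u₁ u₂)‖
  rw [norm_herm_collide_collide h1 h2 hu1 hu2, inv_pow, Real.sq_sqrt hw.le,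
    inv_mul_cancel₀ hw.ne', one_mul]

end
end

section
/- (Phase-shift consistency, equality (pro1-2)) With the setup of the previous statement, define the dressed polarization vectors u_{{S},p} as in the paper: u_{{S},p} = e^{φ_{{S},p}}·∏_{s∈S}((ζ_s*-ζ_p*)/(ζ_s-ζ_p*)) · (vector determinant with scalar columns d_{·,s}, s ∈ S, vector last column u_·, rows S∪{p}) / det[d on S]. Then, for S = {i₁,…,i_{n-1}}: |(ζ_j-ζ_k)/(ζ_j-ζ_k*)|² · (1 + ((ζ_j-ζ_j*)(ζ_k-ζ_k*)/|ζ_j-ζ_k*|²)·|⟨u_{{S},j}, u_{{S},k}⟩|²) = |(ζ_j-ζ_k)/(ζ_j-ζ_k*)|² · det[d on S∪{j,k}]·det[d on S] / (det[d on S∪{j}]·det[d on S∪{k}]). Equivalently, |⟨u_{{S},j},u_{{S},k}⟩|² = -(|ζ_k-ζ_j*|²/((ζ_j-ζ_j*)(ζ_k-ζ_k*)))·det[rows S∪{j}, cols S∪{k}]·det[rows S∪{k}, cols S∪{j}]/(det[d on S∪{j}]·det[d on S∪{k}]). -/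
/-!
Write `V_j`, `V_k` for the vector determinants with rows `S ∪ {j}`, `S ∪ {k}`, and `X` for the mixed
minor `det[rows S∪{j}, cols S∪{k}]`. Expanding along the vector column, `V_j` and `V_k` are
combinations of the `u_p` whose coefficients are the cofactors of `X` along its last row and last
column. Since `⟨u_p, u_q⟩ = -i (ζ_q - ζ_p*) d_{pq}`, the double sum `⟨V_j, V_k⟩` is a sum of
cofactor expansions of `X`, all alien except one, so `⟨V_j, V_k⟩ = -i (ζ_k - ζ_j*) det[S] X`.
The phase normalisation makes the squared modulus of the prefactor of `u_{S,j}` equal to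
`d_{jj} det[S] / det[S∪{j}]`, and `d` is Hermitian, so
`|⟨u_{S,j}, u_{S,k}⟩|² = d_{jj} d_{kk} |ζ_j - ζ_k*|² X X̄ / (det[S∪{j}] det[S∪{k}])`
with `X̄ = det[rows S∪{k}, cols S∪{j}]`. As `(ζ_j - ζ_j*) d_{jj} = i`, the bracket on the left
becomes `1 - X X̄ / (det[S∪{j}] det[S∪{k}])`, which is the right side by the Desnanot–Jacobi
identity. That identity is Jacobi's complementary-minor theorem for a `2 × 2` corner of the
adjugate.
-/

open Complex Matrix BigOperators

noncomputable section

open ComplexConjugate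

namespace Matrix

variable {R : Type*} [CommRing R] {m o : Type*} [Fintype m] [Fintype o] [DecidableEq m]
  [DecidableEq o]

theorem det_mul_det_toBlocks₂₂_adjugate (A : Matrix (m ⊕ o) (m ⊕ o) R) :
    A.det * A.adjugate.toBlocks₂₂.det = A.toBlocks₁₁.det * A.det ^ Fintype.card o := by
  have hcol : A * fromBlocks 1 A.adjugate.toBlocks₁₂ 0 A.adjugate.toBlocks₂₂ =
      fromBlocks A.toBlocks₁₁ 0 A.toBlocks₂₁ (A.det • 1) := by
    ext i (j | j)
    · cases i <;> simp [mul_apply, Fintype.sum_sum_type, one_apply, toBlocks₁₁, toBlocks₂₁]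
    · have h := congrFun (congrFun (mul_adjugate A) i) (Sum.inr j)
      cases i <;> simpa [mul_apply, Fintype.sum_sum_type, toBlocks₁₂, toBlocks₂₂, one_apply] using h
  have h := congrArg det hcol
  rwa [det_mul, det_fromBlocks_zero₂₁, det_fromBlocks_zero₁₂, det_one, one_mul, det_smul, det_one,
    mul_one] at h

-- `det A` is cancelled for the generic matrix, whose determinant is a nonzero polynomial.
theorem det_toBlocks₂₂_adjugate [Nonempty o] (A : Matrix (m ⊕ o) (m ⊕ o) R) :
    A.adjugate.toBlocks₂₂.det = A.toBlocks₁₁.det * A.det ^ (Fintype.card o - 1) := by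
  let A' := mvPolynomialX (m ⊕ o) (m ⊕ o) ℤ
  suffices A'.adjugate.toBlocks₂₂.det = A'.toBlocks₁₁.det * A'.det ^ (Fintype.card o - 1) by
    set f := MvPolynomial.aeval (R := ℤ) fun p : (m ⊕ o) × (m ⊕ o) => A p.1 p.2
    rw [← mvPolynomialX_mapMatrix_aeval ℤ A, ← AlgHom.map_adjugate]
    change (f.mapMatrix A'.adjugate.toBlocks₂₂).det =
      (f.mapMatrix A'.toBlocks₁₁).det * (f.mapMatrix A').det ^ _
    rw [← AlgHom.map_det, ← AlgHom.map_det, ← AlgHom.map_det, ← map_pow, ← map_mul, this]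
  apply mul_left_cancel₀ (det_mvPolynomialX_ne_zero (m ⊕ o) ℤ)
  rw [det_mul_det_toBlocks₂₂_adjugate, mul_left_comm, ← pow_succ',
    Nat.sub_add_cancel Fintype.card_pos]

theorem desnanot_jacobi {n : ℕ} (A : Matrix (Fin (n+2)) (Fin (n+2)) R) :
    let S : Fin n → Fin (n+2) := Fin.castAdd 2
    let Sj : Fin (n+1) → Fin (n+2) := Fin.snoc S (Fin.natAdd n 0)
    let Sk : Fin (n+1) → Fin (n+2) := Fin.snoc S (Fin.natAdd n 1)
    (A.submatrix Sj Sj).det * (A.submatrix Sk Sk).det -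
      (A.submatrix Sj Sk).det * (A.submatrix Sk Sj).det = A.det * (A.submatrix S S).det := by
  intro S Sj Sk
  have hj : Sj = (Fin.natAdd n 1 : Fin (n+2)).succAbove := by
    ext i
    refine Fin.lastCases ?_ (fun i => ?_) i <;> simp [Sj, S, Fin.succAbove, Fin.lt_def]
  have hk : Sk = (Fin.natAdd n 0 : Fin (n+2)).succAbove := by
    ext i
    refine Fin.lastCases ?_ (fun i => ?_) i <;> simp [Sk, S, Fin.succAbove, Fin.lt_def]
  have h := det_toBlocks₂₂_adjugate (A.submatrix finSumFinEquiv finSumFinEquiv)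
  rw [adjugate_submatrix_equiv_self, det_submatrix_equiv_self, Fintype.card_fin, det_fin_two] at h
  simp only [toBlocks₂₂, toBlocks₁₁, submatrix_apply, of_apply, finSumFinEquiv_apply_left,
    finSumFinEquiv_apply_right, adjugate_fin_succ_eq_det_submatrix, Fin.val_natAdd, Fin.isValue,
    Fin.coe_ofNat_eq_mod, Nat.zero_mod, Nat.mod_succ, add_zero, Even.add_self, Even.neg_pow,
    one_pow, one_mul, odd_add_one_self, odd_add_self_one', Odd.neg_one_pow, neg_mul, mul_neg,
    neg_neg, Nat.add_one_sub_one, pow_one] at h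
  rw [hj, hk, mul_comm A.det, mul_comm (det _)]
  exact h

variable {κ : Type*} [Fintype κ] [DecidableEq κ]

-- Expansions by alien cofactors vanish, so only the `(i, i)` term survives.
theorem sum_adjugate_mul_adjugate_mul_sub (X : Matrix κ κ R) (α β : κ → R) (i : κ) :
    ∑ p, ∑ q, X.adjugate i p * X.adjugate q i * ((β q - α p) * X p q) =
      (β i - α i) * X.adjugate i i * X.det := by
  have hrow : ∀ q, ∑ p, X.adjugate i p * X p q = if i = q then X.det else 0 := fun q => by
    simpa [mul_apply, one_apply] using congrFun (congrFun (adjugate_mul X) i) q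
  have hcol : ∀ p, ∑ q, X p q * X.adjugate q i = if p = i then X.det else 0 := fun p => by
    simpa [mul_apply, one_apply] using congrFun (congrFun (mul_adjugate X) p) i
  calc ∑ p, ∑ q, X.adjugate i p * X.adjugate q i * ((β q - α p) * X p q)
      = ∑ q, X.adjugate q i * β q * ∑ p, X.adjugate i p * X p q -
          ∑ p, X.adjugate i p * α p * ∑ q, X p q * X.adjugate q i := by
        simp only [mul_sub, sub_mul, Finset.sum_sub_distrib, Finset.mul_sum]
        congr 1
        · rw [Finset.sum_comm]
          exact Finset.sum_congr rfl fun _ _ => Finset.sum_congr rfl fun _ _ => by ring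
        · exact Finset.sum_congr rfl fun _ _ => Finset.sum_congr rfl fun _ _ => by ring
    _ = (β i - α i) * X.adjugate i i * X.det := by
        simp [hrow, hcol]; ring

end Matrix

section Herm
variable {m : ℕ}

theorem conj_herm (v w : Fin m → ℂ) : conj (herm v w) = herm w v := by
  simp only [herm, map_sum, map_mul, conj_conj, mul_comm]

theorem herm_sum_mul_sum {κ κ' : Type*} [Fintype κ] [Fintype κ'] (c : κ → ℂ) (v : κ → Fin m → ℂ)
    (c' : κ' → ℂ) (w : κ' → Fin m → ℂ) :
    herm (fun a => ∑ p, c p * v p a) (fun a => ∑ q, c' q * w q a) =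
      ∑ p, ∑ q, c p * conj (c' q) * herm (v p) (w q) := by
  simp only [herm, map_sum, map_mul, Finset.sum_mul, Finset.mul_sum]
  rw [Finset.sum_congr rfl fun _ _ => Finset.sum_comm, Finset.sum_comm]
  refine Finset.sum_congr rfl fun p _ => ?_
  rw [Finset.sum_comm]
  exact Finset.sum_congr rfl fun _ _ => Finset.sum_congr rfl fun _ _ => by ring

theorem herm_mul_div (c c' D D' : ℂ) (v w : Fin m → ℂ) :
    herm (fun a => c * v a / D) (fun a => c' * w a / D') =
      c * conj c' / (D * conj D') * herm v w := by
  simp only [herm, Finset.mul_sum, map_div₀, map_mul]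
  exact Finset.sum_congr rfl fun _ _ => by ring

end Herm

theorem Matrix.IsHermitian.star_det_submatrix {ι κ 𝕜 : Type*} [CommRing 𝕜] [StarRing 𝕜]
    [Fintype κ] [DecidableEq κ]
    {A : Matrix ι ι 𝕜} (hA : A.IsHermitian) (r c : κ → ι) :
    star (A.submatrix r c).det = (A.submatrix c r).det := by
  rw [← det_conjTranspose, conjTranspose_submatrix, hA.eq]

section CauchyGram
variable {ι : Type*} {m : ℕ} (ζ : ι → ℂ) (u : ι → Fin m → ℂ)

def cauchyGram : Matrix ι ι ℂ := of fun p q => I / (ζ q - conj (ζ p)) * herm (u p) (u q)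

theorem cauchyGram_isHermitian : (cauchyGram ζ u).IsHermitian := by
  ext p q
  simp only [cauchyGram, conjTranspose_apply, of_apply, star_def, map_mul, map_div₀, conj_I,
    map_sub, conj_conj, conj_herm]
  rw [← neg_sub, div_neg, neg_div]
  ring

variable {ζ}

theorem sub_conj_ne_zero_s19 (him : ∀ p, 0 < (ζ p).im) (p q : ι) : ζ q - conj (ζ p) ≠ 0 := by
  intro h
  have := congrArg im h
  simp only [sub_im, conj_im, zero_im] at this
  linarith [him p, him q]

theorem herm_eq_cauchyGram (him : ∀ p, 0 < (ζ p).im) (p q : ι) :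
    herm (u p) (u q) = -I * (ζ q - conj (ζ p)) * cauchyGram ζ u p q := by
  have := sub_conj_ne_zero_s19 him p q
  simp only [cauchyGram, of_apply]
  field_simp
  rw [I_sq]
  ring

theorem cauchyGram_apply_self_mul (him : ∀ p, 0 < (ζ p).im) {p : ι} (hu : herm (u p) (u p) = 1) :
    cauchyGram ζ u p p * (ζ p - conj (ζ p)) = I := by
  rw [cauchyGram, of_apply, hu, mul_one, div_mul_cancel₀ _ (sub_conj_ne_zero_s19 him p p)]

end CauchyGram

section VecDet
variable {R ι : Type*} [CommRing R] {m n : ℕ}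

def vecDet (A : Matrix ι ι R) (u : ι → Fin m → R) (e : Fin n → ι) (f : Fin (n+1) → ι) :
    Fin m → R := fun a =>
  det (fun p q : Fin (n+1) => if h : (q : ℕ) < n then A (f p) (e ⟨q, h⟩) else u (f p) a)

theorem vecDet_eq_sum_adjugate (A : Matrix ι ι R) (u : ι → Fin m → R) (e : Fin n → ι)
    (f : Fin (n+1) → ι) (k : ι) (a : Fin m) :
    vecDet A u e f a =
      ∑ p, (A.submatrix f (Fin.snoc e k)).adjugate (Fin.last n) p * u (f p) a := by
  have hcol : (of fun p q : Fin (n+1) =>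
      if h : (q : ℕ) < n then A (f p) (e ⟨q, h⟩) else u (f p) a) =
      (A.submatrix f (Fin.snoc e k)).updateCol (Fin.last n) fun p => u (f p) a := by
    ext p q
    refine Fin.lastCases ?_ (fun s => ?_) q <;> simp
  calc vecDet A u e f a
      = ((A.submatrix f (Fin.snoc e k)).updateCol (Fin.last n) fun p => u (f p) a).det :=
        congrArg det hcol
    _ = _ := by rw [← cramer_apply, cramer_eq_adjugate_mulVec]; rfl

end VecDet

section HermitianProduct
variable {ι : Type*} {m n : ℕ} {ζ : ι → ℂ} (u : ι → Fin m → ℂ)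

theorem herm_vecDet_snoc (him : ∀ p, 0 < (ζ p).im) (e : Fin n → ι) (j k : ι) :
    herm (vecDet (cauchyGram ζ u) u e (Fin.snoc e j))
        (vecDet (cauchyGram ζ u) u e (Fin.snoc e k)) =
      -I * (ζ k - conj (ζ j)) * ((cauchyGram ζ u).submatrix e e).det *
        ((cauchyGram ζ u).submatrix (Fin.snoc e j) (Fin.snoc e k)).det := by
  set A := cauchyGram ζ u
  set fj : Fin (n+1) → ι := Fin.snoc e j
  set fk : Fin (n+1) → ι := Fin.snoc e k
  set X := A.submatrix fj fk
  have hX : (A.submatrix fk fj)ᴴ = X := by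
    rw [conjTranspose_submatrix, (cauchyGram_isHermitian ζ u).eq]
  have hconj : ∀ q, conj ((A.submatrix fk fj).adjugate (Fin.last n) q) =
      X.adjugate q (Fin.last n) := fun q => by
    rw [← hX, ← adjugate_conjTranspose]
    rfl
  have hvj : vecDet A u e fj = fun a => ∑ p, X.adjugate (Fin.last n) p * u (fj p) a :=
    funext (vecDet_eq_sum_adjugate A u e fj k)
  have hvk : vecDet A u e fk =
      fun a => ∑ q, (A.submatrix fk fj).adjugate (Fin.last n) q * u (fk q) a :=
    funext (vecDet_eq_sum_adjugate A u e fk j)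
  have hcorner : X.adjugate (Fin.last n) (Fin.last n) = (A.submatrix e e).det := by
    simp [adjugate_fin_succ_eq_det_submatrix, X, fj, fk, submatrix_submatrix]
  rw [hvj, hvk, herm_sum_mul_sum]
  simp only [hconj, herm_eq_cauchyGram u him]
  calc _ = -I * ∑ p, ∑ q, X.adjugate (Fin.last n) p * X.adjugate q (Fin.last n) *
        ((ζ (fk q) - conj (ζ (fj p))) * X p q) := by
        simp only [Finset.mul_sum]
        exact Finset.sum_congr rfl fun _ _ => Finset.sum_congr rfl fun _ _ => by
          simp only [X, submatrix_apply, A]; ring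
    _ = _ := by
        rw [sum_adjugate_mul_adjugate_mul_sub, hcorner]
        simp only [fj, fk, Fin.snoc_last]
        ring

end HermitianProduct

theorem norm_prod_conj_sub_div {κ : Type*} [Fintype κ] (z : κ → ℂ) (w : ℂ) :
    ‖∏ s, (conj (z s) - conj w) / (z s - conj w)‖ = ∏ s, ‖(z s - w) / (z s - conj w)‖ := by
  rw [norm_prod]
  refine Finset.prod_congr rfl fun s _ => ?_
  rw [norm_div, norm_div, ← map_sub, norm_conj]

section Dressing
variable {ι : Type*} {m n : ℕ} (ζ : ι → ℂ) (u : ι → Fin m → ℂ)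

-- `(√r)⁻¹ = e^{φ_{S,j}}` for `r = e^{-2φ_{S,j}}`.
def dressingFactor (e : Fin n → ι) (r : ℝ) (j : ι) : ℂ :=
  (((√r)⁻¹ : ℝ) : ℂ) * ∏ s, (conj (ζ (e s)) - conj (ζ j)) / (ζ (e s) - conj (ζ j))

def dressedVec (e : Fin n → ι) (r : ℝ) (j : ι) : Fin m → ℂ := fun a =>
  dressingFactor ζ e r j * vecDet (cauchyGram ζ u) u e (Fin.snoc e j) a /
    ((cauchyGram ζ u).submatrix e e).det

variable {ζ}

theorem ofReal_norm_sq_dressingFactor (e : Fin n → ι) {r : ℝ} (hr : 0 < r) (j : ι) {b c : ℂ}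
    (h : (r : ℂ) = ((∏ s, ‖(ζ (e s) - ζ j) / (ζ (e s) - conj (ζ j))‖ ^ 2 : ℝ) : ℂ) * b / c) :
    ((‖dressingFactor ζ e r j‖ ^ 2 : ℝ) : ℂ) = c / b := by
  rw [Finset.prod_pow, ← norm_prod_conj_sub_div] at h
  have hr' : (r : ℂ) ≠ 0 := ofReal_ne_zero.2 hr.ne'
  rw [h] at hr'
  have hP : ((‖∏ s, (conj (ζ (e s)) - conj (ζ j)) / (ζ (e s) - conj (ζ j))‖ ^ 2 : ℝ) : ℂ) ≠ 0 :=
    left_ne_zero_of_mul (div_ne_zero_iff.1 hr').1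
  have hb : b ≠ 0 := right_ne_zero_of_mul (div_ne_zero_iff.1 hr').1
  have hc : c ≠ 0 := (div_ne_zero_iff.1 hr').2
  rw [dressingFactor, norm_mul, mul_pow, norm_real, Real.norm_of_nonneg (by positivity), inv_pow,
    Real.sq_sqrt hr.le, ofReal_mul, ofReal_inv, h]
  field_simp

theorem norm_herm_dressedVec (him : ∀ p, 0 < (ζ p).im) (e : Fin n → ι) (rj rk : ℝ) (j k : ι)
    (hDS : ((cauchyGram ζ u).submatrix e e).det ≠ 0) :
    ‖herm (dressedVec ζ u e rj j) (dressedVec ζ u e rk k)‖ =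
      ‖dressingFactor ζ e rj j‖ * ‖dressingFactor ζ e rk k‖ * ‖ζ j - conj (ζ k)‖ *
        ‖((cauchyGram ζ u).submatrix (Fin.snoc e j) (Fin.snoc e k)).det‖ /
          ‖((cauchyGram ζ u).submatrix e e).det‖ := by
  have hD : ‖((cauchyGram ζ u).submatrix e e).det‖ ≠ 0 := norm_ne_zero_iff.2 hDS
  unfold dressedVec
  rw [herm_mul_div, herm_vecDet_snoc u him]
  simp only [norm_mul, norm_div, norm_neg, norm_I, norm_conj]
  rw [← norm_conj (ζ k - _), map_sub, conj_conj, norm_sub_rev]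
  field_simp

theorem ofReal_norm_sq_herm_dressedVec (him : ∀ p, 0 < (ζ p).im) (e : Fin n → ι) {rj rk : ℝ}
    (hrj : 0 < rj) (hrk : 0 < rk) (j k : ι) (hDS : ((cauchyGram ζ u).submatrix e e).det ≠ 0)
    (hrje : (rj : ℂ) = ((∏ s, ‖(ζ (e s) - ζ j) / (ζ (e s) - conj (ζ j))‖ ^ 2 : ℝ) : ℂ) *
      ((cauchyGram ζ u).submatrix (Fin.snoc e j) (Fin.snoc e j)).det /
        (cauchyGram ζ u j j * ((cauchyGram ζ u).submatrix e e).det))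
    (hrke : (rk : ℂ) = ((∏ s, ‖(ζ (e s) - ζ k) / (ζ (e s) - conj (ζ k))‖ ^ 2 : ℝ) : ℂ) *
      ((cauchyGram ζ u).submatrix (Fin.snoc e k) (Fin.snoc e k)).det /
        (cauchyGram ζ u k k * ((cauchyGram ζ u).submatrix e e).det)) :
    ((‖herm (dressedVec ζ u e rj j) (dressedVec ζ u e rk k)‖ ^ 2 : ℝ) : ℂ) =
      cauchyGram ζ u j j * cauchyGram ζ u k k * ((‖ζ j - conj (ζ k)‖ ^ 2 : ℝ) : ℂ) *
        (((cauchyGram ζ u).submatrix (Fin.snoc e j) (Fin.snoc e k)).det *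
          ((cauchyGram ζ u).submatrix (Fin.snoc e k) (Fin.snoc e j)).det) /
        (((cauchyGram ζ u).submatrix (Fin.snoc e j) (Fin.snoc e j)).det *
          ((cauchyGram ζ u).submatrix (Fin.snoc e k) (Fin.snoc e k)).det) := by
  have hA := cauchyGram_isHermitian ζ u
  have hsq : ∀ {κ : Type} [Fintype κ] [DecidableEq κ] (r c : κ → ι),
      ((‖((cauchyGram ζ u).submatrix r c).det‖ ^ 2 : ℝ) : ℂ) =
        ((cauchyGram ζ u).submatrix r c).det * ((cauchyGram ζ u).submatrix c r).det :=
    fun r c => by rw [ofReal_pow, ← mul_conj', ← hA.star_det_submatrix r c]; rfl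
  rw [norm_herm_dressedVec u him e rj rk j k hDS, div_pow, mul_pow, mul_pow, mul_pow, ofReal_div,
    ofReal_mul, ofReal_mul, ofReal_mul, ofReal_norm_sq_dressingFactor e hrj j hrje,
    ofReal_norm_sq_dressingFactor e hrk k hrke, hsq, hsq]
  field_simp

end Dressing

theorem stmt19 {m n : ℕ} (ζ : Fin (n+2) → ℂ) (him : ∀ p, 0 < (ζ p).im)
    (u : Fin (n+2) → Fin m → ℂ) (hu : ∀ p, herm (u p) (u p) = 1)
    -- indices: S = {i₁,…,iₙ} = {0,…,n-1}, j = n, k = n+1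
    (d : Matrix (Fin (n+2)) (Fin (n+2)) ℂ)
    (hd : ∀ p q, d p q = Complex.I / (ζ q - (starRingEnd ℂ) (ζ p)) * herm (u p) (u q))
    (jdx kdx : Fin (n+2)) (hj : jdx = ⟨n, by omega⟩) (hk : kdx = ⟨n+1, by omega⟩)
    (e : Fin n → Fin (n+2)) (he : e = Fin.castLE (by omega))
    (fj fk : Fin (n+1) → Fin (n+2))
    (hfj : fj = Fin.snoc (Fin.castLE (by omega)) jdx)
    (hfk : fk = Fin.snoc (Fin.castLE (by omega)) kdx)
    (DS DSj DSk : ℂ)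
    (hDS : DS = (d.submatrix e e).det)
    (hDSj : DSj = (d.submatrix fj fj).det)
    (hDSk : DSk = (d.submatrix fk fk).det)
    (hDSne : DS ≠ 0) (hDSjne : DSj ≠ 0) (hDSkne : DSk ≠ 0)
    -- rj = e^{-2φ_{{S},j}}, rk = e^{-2φ_{{S},k}}, positive reals
    (rj rk : ℝ) (hrj : 0 < rj) (hrk : 0 < rk)
    (hrje : (rj : ℂ) = ((∏ s : Fin n, (‖(ζ (e s) - ζ jdx) /
        (ζ (e s) - (starRingEnd ℂ) (ζ jdx))‖)^2 : ℝ) : ℂ) * DSj / (d jdx jdx * DS))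
    (hrke : (rk : ℂ) = ((∏ s : Fin n, (‖(ζ (e s) - ζ kdx) /
        (ζ (e s) - (starRingEnd ℂ) (ζ kdx))‖)^2 : ℝ) : ℂ) * DSk / (d kdx kdx * DS)) :
    -- vector determinants: rows S∪{p}, scalar columns d_{·,s} (s ∈ S), vector last column
    let Vec : (Fin (n+1) → Fin (n+2)) → Fin m → ℂ := fun f a =>
      Matrix.det (fun p q : Fin (n+1) =>
        if h : (q : ℕ) < n then d (f p) (e ⟨q, h⟩) else u (f p) a)
    -- dressed polarization vectors u_{{S},j} and u_{{S},k}
    let uSj : Fin m → ℂ := fun a =>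
      (((Real.sqrt rj)⁻¹ : ℝ) : ℂ) *
        (∏ s : Fin n, ((starRingEnd ℂ) (ζ (e s)) - (starRingEnd ℂ) (ζ jdx)) /
          (ζ (e s) - (starRingEnd ℂ) (ζ jdx))) * Vec fj a / DS
    let uSk : Fin m → ℂ := fun a =>
      (((Real.sqrt rk)⁻¹ : ℝ) : ℂ) *
        (∏ s : Fin n, ((starRingEnd ℂ) (ζ (e s)) - (starRingEnd ℂ) (ζ kdx)) /
          (ζ (e s) - (starRingEnd ℂ) (ζ kdx))) * Vec fk a / DS
    (((‖(ζ jdx - ζ kdx) / (ζ jdx - (starRingEnd ℂ) (ζ kdx))‖)^2 : ℝ) : ℂ) *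
      (1 + (ζ jdx - (starRingEnd ℂ) (ζ jdx)) * (ζ kdx - (starRingEnd ℂ) (ζ kdx)) /
          (((‖ζ jdx - (starRingEnd ℂ) (ζ kdx)‖)^2 : ℝ) : ℂ) *
          (((‖herm uSj uSk‖)^2 : ℝ) : ℂ)) =
    (((‖(ζ jdx - ζ kdx) / (ζ jdx - (starRingEnd ℂ) (ζ kdx))‖)^2 : ℝ) : ℂ) *
      d.det * DS / (DSj * DSk) := by
  intro Vec uSj uSk
  have hdG : d = cauchyGram ζ u := Matrix.ext hd
  have hN : ((‖herm uSj uSk‖ ^ 2 : ℝ) : ℂ) =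
      d jdx jdx * d kdx kdx * ((‖ζ jdx - conj (ζ kdx)‖ ^ 2 : ℝ) : ℂ) *
        ((d.submatrix fj fk).det * (d.submatrix fk fj).det) / (DSj * DSk) := by
    subst hdG he hfj hfk hDS hDSj hDSk
    exact ofReal_norm_sq_herm_dressedVec u him _ hrj hrk jdx kdx hDSne hrje hrke
  have hDJ : DSj * DSk - (d.submatrix fj fk).det * (d.submatrix fk fj).det = d.det * DS := by
    subst hj hk he hfj hfk hDS hDSj hDSk
    exact Matrix.desnanot_jacobi d
  have hjj : d jdx jdx * (ζ jdx - conj (ζ jdx)) = I :=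
    hdG ▸ cauchyGram_apply_self_mul u him (hu jdx)
  have hkk : d kdx kdx * (ζ kdx - conj (ζ kdx)) = I :=
    hdG ▸ cauchyGram_apply_self_mul u him (hu kdx)
  have hQ : ((‖ζ jdx - conj (ζ kdx)‖ ^ 2 : ℝ) : ℂ) ≠ 0 := by
    exact_mod_cast pow_ne_zero 2 (norm_ne_zero_iff.2 (sub_conj_ne_zero_s19 him kdx jdx))
  rw [hN]
  generalize ((‖(ζ jdx - ζ kdx) / (ζ jdx - conj (ζ kdx))‖ ^ 2 : ℝ) : ℂ) = c
  field_simp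
  linear_combination c * (hDJ + ((d.submatrix fj fk).det * (d.submatrix fk fj).det) *
      ((ζ kdx - conj (ζ kdx)) * d kdx kdx * hjj + I * hkk + I_sq))
end
end
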